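/- Let p be an odd prime, η a multiplicative character of F_p^× extended by η(0)=0, with η² nontrivial. Let S be an invertible symmetric r×r matrix over F_p with r odd, and c ∈ F_p. Then the sum over w ∈ F_p^r of η(w S wᵀ + c) equals p^{(r-1)/2} · J(η, φ) · φ((-1)^{(r+1)/2} det S) · η(c) · φ(c), where φ is the quadratic character of F_p and J(η,φ) = Σ_{u ∈ F_p} η(u) φ(1-u) is the Jacobi sum. In particular the sum vanishes when c = 0. -/

import Mathlib

/-!
Diagonalise `S` by a congruence `Pᵀ S P = diag a`; this changes neither the sum nor `φ (det S)`.
Expanding `η` in additive characters, `g(η⁻¹) η(x) = ∑_b η⁻¹(b) ψ(b x)`, the sum over `u` of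
`ψ (b ∑ aᵢ uᵢ²)` factors into one-variable quadratic Gauss sums `φ(b aᵢ) g(φ)`. As `r` is odd,
what remains is `φ(∏ aᵢ) g(φ)^r ∑_b (η⁻¹φ)(b) ψ(c b) = φ(∏ aᵢ) g(φ)^r (ηφ)(c) g(η⁻¹φ)`, and
`g(φ)² = φ(-1) p` together with `g(ηφ) J(η,φ) = g(η) g(φ)` turns this into the stated value.
-/

open Matrix

/-- The quadratic character of `ZMod p` with values in `ℂ`. -/
noncomputable def quadCharC (p : ℕ) [Fact p.Prime] : MulChar (ZMod p) ℂ :=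
  (quadraticChar (ZMod p)).ringHomComp (Int.castRingHom ℂ)

open Finset

lemma AddChar.map_sum_eq_prod {A M ι : Type*} [AddCommMonoid A] [CommMonoid M]
    (ψ : AddChar A M) (s : Finset ι) (f : ι → A) : ψ (∑ i ∈ s, f i) = ∏ i ∈ s, ψ (f i) :=
  map_prod ψ.toMonoidHom (fun i => Multiplicative.ofAdd (f i)) s

section GaussSum

variable {F R : Type*} [Field F] [Fintype F] [CommRing R] [IsDomain R]

lemma gaussSum_mulShift_eq_of_ne_one {χ : MulChar F R} (hχ : χ ≠ 1) (ψ : AddChar F R) (y : F) :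
    gaussSum χ (ψ.mulShift y) = χ⁻¹ y * gaussSum χ ψ := by
  rcases eq_or_ne y 0 with rfl | hy
  · rw [AddChar.mulShift_zero, gaussSum_one_right hχ, MulChar.map_zero, zero_mul]
  · exact gaussSum_mulShift_eq χ ψ (Units.mk0 y hy)

lemma gaussSum_mul_gaussSum_inv {χ : MulChar F R} (hχ : χ ≠ 1) {ψ : AddChar F R}
    (hψ : ψ.IsPrimitive) : gaussSum χ ψ * gaussSum χ⁻¹ ψ = χ (-1) * Fintype.card F := by
  rw [← mul_gaussSum_inv_eq_gaussSum χ⁻¹, mul_left_comm, gaussSum_mul_gaussSum_eq_card hχ hψ,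
    MulChar.inv_apply', inv_neg_one]

lemma gaussSum_inv_mul_jacobiSum {χ φ : MulChar F ℂ} (hχ : χ ≠ 1) (hχφ : χ * φ ≠ 1)
    {ψ : AddChar F ℂ} (hψ : ψ.IsPrimitive) :
    gaussSum χ⁻¹ ψ * jacobiSum χ φ = φ (-1) * gaussSum φ ψ * gaussSum (χ * φ)⁻¹ ψ := by
  have hcard : (Fintype.card F : ℂ) ≠ 0 := Nat.cast_ne_zero.mpr Fintype.card_ne_zero
  have hφ : φ (-1) * φ (-1) = 1 := by rw [← map_mul, neg_one_mul, neg_neg, map_one]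
  -- after multiplying by `g(χ) g(χφ)` both sides become `χ(-1) q g(χ) g(φ)`
  apply mul_left_cancel₀ (mul_ne_zero (gaussSum_ne_zero_of_nontrivial hcard hχ hψ)
    (gaussSum_ne_zero_of_nontrivial hcard hχφ hψ))
  have hχ₁ := gaussSum_mul_gaussSum_inv hχ hψ
  have hχφ₁ := gaussSum_mul_gaussSum_inv hχφ hψ
  have hJ := jacobiSum_mul_nontrivial hχφ ψ
  rw [MulChar.mul_apply] at hχφ₁
  linear_combination (gaussSum (χ * φ) ψ * jacobiSum χ φ) * hχ₁
    + (χ (-1) * Fintype.card F) * hJ - (φ (-1) * gaussSum φ ψ * gaussSum χ ψ) * hχφ₁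
    - (χ (-1) * Fintype.card F * gaussSum χ ψ * gaussSum φ ψ) * hφ

lemma gaussSum_inv_mul_sum_mulChar_add {η : MulChar F R} (hη : η ≠ 1) (ψ : AddChar F R)
    {α : Type*} [Fintype α] (Q : α → F) (c : F) :
    gaussSum η⁻¹ ψ * ∑ u, η (Q u + c) = ∑ b, η⁻¹ b * ψ (c * b) * ∑ u, ψ (b * Q u) := by
  calc gaussSum η⁻¹ ψ * ∑ u, η (Q u + c)
      = ∑ u, gaussSum η⁻¹ (ψ.mulShift (Q u + c)) := by
        simp_rw [gaussSum_mulShift_eq_of_ne_one (inv_ne_one.mpr hη), inv_inv, mul_sum, mul_comm]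
    _ = ∑ b, η⁻¹ b * ψ (c * b) * ∑ u, ψ (b * Q u) := by
        simp_rw [gaussSum, AddChar.mulShift_apply, mul_sum]
        rw [sum_comm]
        refine sum_congr rfl fun b _ => sum_congr rfl fun u _ => ?_
        rw [mul_assoc, ← AddChar.map_add_eq_mul, add_mul, add_comm, mul_comm (Q u)]

end GaussSum

/-- `quadCharC p` is `complexQuadraticChar (ZMod p)` by definition. -/
noncomputable abbrev complexQuadraticChar (F : Type*) [Field F] [Fintype F] [DecidableEq F] :
    MulChar F ℂ :=
  (quadraticChar F).ringHomComp (Int.castRingHom ℂ)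

section QuadraticCharacter

variable {F : Type*} [Field F] [Fintype F] [DecidableEq F]

lemma complexQuadraticChar_isQuadratic : (complexQuadraticChar F).IsQuadratic :=
  (quadraticChar_isQuadratic F).comp _

lemma complexQuadraticChar_ne_one (hF : ringChar F ≠ 2) : complexQuadraticChar F ≠ 1 :=
  (MulChar.ringHomComp_ne_one_iff (Int.castRingHom ℂ).injective_int).mpr (quadraticChar_ne_one hF)

lemma complexQuadraticChar_sq {b : F} (hb : b ≠ 0) : complexQuadraticChar F (b ^ 2) = 1 := by
  simp [quadraticChar_sq_one' hb]

lemma sum_addChar_mul_sq (hF : ringChar F ≠ 2) {ψ : AddChar F ℂ} (hψ : ψ.IsPrimitive)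
    {b : F} (hb : b ≠ 0) :
    ∑ x, ψ (b * x ^ 2) = complexQuadraticChar F b * gaussSum (complexQuadraticChar F) ψ := by
  have hcount (t : F) :
      (#{x : F | x ^ 2 = t}.toFinset : ℂ) = complexQuadraticChar F t + 1 := by
    rw [show complexQuadraticChar F t = (quadraticChar F t : ℂ) from rfl]
    exact_mod_cast quadraticChar_card_sqrts hF t
  calc ∑ x, ψ (b * x ^ 2)
      = ∑ t, (#{x : F | x ^ 2 = t}.toFinset : ℂ) * ψ (b * t) := by
        rw [← sum_fiberwise' univ (· ^ 2) (fun t => ψ (b * t))]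
        simp
    _ = gaussSum (complexQuadraticChar F) (ψ.mulShift b) + ∑ t, ψ.mulShift b t := by
        simp only [hcount, add_mul, one_mul, sum_add_distrib, gaussSum, AddChar.mulShift_apply]
    _ = complexQuadraticChar F b * gaussSum (complexQuadraticChar F) ψ := by
        rw [gaussSum_mulShift_eq_of_ne_one (complexQuadraticChar_ne_one hF),
          AddChar.sum_eq_zero_of_ne_one (hψ hb), add_zero, complexQuadraticChar_isQuadratic.inv]

lemma sum_addChar_weightedSumSquares (hF : ringChar F ≠ 2) {ψ : AddChar F ℂ}
    (hψ : ψ.IsPrimitive) {ι : Type*} [Fintype ι] [DecidableEq ι] {a : ι → F}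
    (ha : ∀ i, a i ≠ 0) :
    ∑ u : ι → F, ψ (∑ i, a i * u i ^ 2) =
      complexQuadraticChar F (∏ i, a i) * gaussSum (complexQuadraticChar F) ψ ^ Fintype.card ι := by
  simp_rw [AddChar.map_sum_eq_prod, ← Fintype.prod_sum fun i x => ψ (a i * x ^ 2),
    sum_addChar_mul_sq hF hψ (ha _), prod_mul_distrib, map_prod, prod_const, card_univ]

theorem sum_mulChar_weightedSumSquares_add (hF : ringChar F ≠ 2) {η : MulChar F ℂ}
    (hη : η ^ 2 ≠ 1) {ι : Type*} [Fintype ι] [DecidableEq ι] {m : ℕ}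
    (hι : Fintype.card ι = 2 * m + 1) {a : ι → F} (ha : ∀ i, a i ≠ 0) (c : F) :
    ∑ u : ι → F, η (∑ i, a i * u i ^ 2 + c) =
      (Fintype.card F : ℂ) ^ m * jacobiSum η (complexQuadraticChar F) *
        complexQuadraticChar F ((-1) ^ (m + 1) * ∏ i, a i) * η c * complexQuadraticChar F c := by
  rw [map_mul, map_pow]
  set φ := complexQuadraticChar F with hφ_def
  set q : ℂ := (Fintype.card F : ℂ)
  obtain ⟨ψ, hψ₁⟩ := AddChar.exists_apply_ne_zero.mpr (one_ne_zero : (1 : F) ≠ 0)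
  have hψ : ψ.IsPrimitive := .of_ne_one fun h => hψ₁ (by rw [h, AddChar.one_apply])
  have hφ : φ.IsQuadratic := complexQuadraticChar_isQuadratic
  have hη₁ : η ≠ 1 := fun h => hη (by rw [h, one_pow])
  have hηφ : η * φ ≠ 1 := fun h => hη (by rw [mul_eq_one_iff_eq_inv.mp h, hφ.inv, hφ.sq_eq_one])
  have hq : q ≠ 0 := Nat.cast_ne_zero.mpr Fintype.card_ne_zero
  set g := gaussSum φ ψ
  have hg : g ^ (2 * m + 1) = (φ (-1) * q) ^ m * g := by
    rw [pow_succ, pow_mul, gaussSum_sq (complexQuadraticChar_ne_one hF) hφ hψ]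
  have hφ₁ : φ (-1) ^ 2 = 1 := by rw [← map_pow, neg_one_sq, map_one]
  have hterm (b : F) : η⁻¹ b * ψ (c * b) * ∑ u : ι → F, ψ (b * ∑ i, a i * u i ^ 2) =
      (η * φ)⁻¹ b * ψ (c * b) * (φ (∏ i, a i) * g ^ (2 * m + 1)) := by
    rcases eq_or_ne b 0 with rfl | hb
    · simp only [MulChar.map_zero, zero_mul]
    have hsum (u : ι → F) : b * ∑ i, a i * u i ^ 2 = ∑ i, (b * a i) * u i ^ 2 := by
      simp_rw [mul_sum, mul_assoc]
    have hprod : φ (∏ i, b * a i) = φ b * φ (∏ i, a i) := by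
      rw [prod_mul_distrib, prod_const, card_univ, hι, pow_succ, pow_mul, map_mul, map_mul,
        map_pow, complexQuadraticChar_sq hb, one_pow, one_mul]
    simp_rw [hsum, sum_addChar_weightedSumSquares hF hψ (fun i => mul_ne_zero hb (ha i)),
      ← hφ_def, hι, hprod, mul_inv, hφ.inv, MulChar.mul_apply]
    ring
  apply mul_left_cancel₀ (gaussSum_ne_zero_of_nontrivial hq (inv_ne_one.mpr hη₁) hψ)
  have hJ := gaussSum_inv_mul_jacobiSum hη₁ hηφ hψ
  have hc := gaussSum_mulShift_eq_of_ne_one (inv_ne_one.mpr hηφ) ψ c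
  rw [inv_inv] at hc
  calc gaussSum η⁻¹ ψ * ∑ u : ι → F, η (∑ i, a i * u i ^ 2 + c)
      = ∑ b, (η * φ)⁻¹ b * ψ (c * b) * (φ (∏ i, a i) * g ^ (2 * m + 1)) := by
        rw [gaussSum_inv_mul_sum_mulChar_add hη₁]
        exact sum_congr rfl fun b _ => hterm b
    _ = (η * φ) c * gaussSum (η * φ)⁻¹ ψ * (φ (∏ i, a i) * g ^ (2 * m + 1)) := by
        rw [← sum_mul, ← hc]
        rfl
    _ = _ := by
        rw [hg, MulChar.mul_apply]
        linear_combination (-(φ (-1) * q) ^ m * φ (∏ i, a i) * η c * φ c) *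
          (φ (-1) * hJ + g * gaussSum (η * φ)⁻¹ ψ * hφ₁)

end QuadraticCharacter

theorem Matrix.IsSymm.exists_transpose_mul_mul_eq_diagonal {K n : Type*} [Field K]
    [Invertible (2 : K)] [Fintype n] [DecidableEq n] {S : Matrix n n K} (hS : S.IsSymm) :
    ∃ (P : Matrix n n K) (a : n → K), IsUnit P.det ∧ Pᵀ * S * P = diagonal a := by
  obtain ⟨v, hv⟩ := LinearMap.BilinForm.exists_orthogonal_basis
    (LinearMap.BilinForm.isSymm_iff.mp (Matrix.isSymm_toBilin'_iff_isSymm.mpr hS))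
  let b := Pi.basisFun K n
  let v' := v.reindex (v.indexEquiv b)
  let := b.invertibleToMatrix v'
  refine ⟨b.toMatrix v', fun i => S.toBilin' (v' i) (v' i), isUnit_det_of_invertible _, ?_⟩
  conv_lhs => rw [← LinearMap.BilinForm.toMatrix'_toBilin' S,
    ← LinearMap.BilinForm.toMatrix_basisFun, LinearMap.BilinForm.toMatrix_mul_basis_toMatrix]
  ext i j
  rw [LinearMap.BilinForm.toMatrix_apply, diagonal_apply]
  split_ifs with hij
  · rw [hij]
  · simp only [v', Module.Basis.reindex_apply]
    exact hv ((v.indexEquiv b).symm.injective.ne hij)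

theorem Matrix.sum_apply_dotProduct_mulVec_eq {K n M : Type*} [Field K] [Fintype K]
    [Fintype n] [DecidableEq n] [AddCommMonoid M] {P : Matrix n n K} (hP : IsUnit P.det)
    (S : Matrix n n K) (f : K → M) :
    ∑ w, f (w ⬝ᵥ S *ᵥ w) = ∑ u, f (u ⬝ᵥ (Pᵀ * S * P) *ᵥ u) := by
  have hP' : IsUnit P := (isUnit_iff_isUnit_det P).mpr hP
  refine (Fintype.sum_bijective (P *ᵥ ·) ⟨mulVec_injective_iff_isUnit.mpr hP',
    mulVec_surjective_iff_isUnit.mpr hP'⟩ _ _ fun u => ?_).symm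
  rw [← mulVec_mulVec, ← mulVec_mulVec, dotProduct_mulVec, vecMul_transpose]

theorem sum_mulChar_quadForm_add {F : Type*} [Field F] [Fintype F] [DecidableEq F]
    (hF : ringChar F ≠ 2) {η : MulChar F ℂ} (hη : η ^ 2 ≠ 1) {n : Type*} [Fintype n]
    [DecidableEq n] {m : ℕ} (hn : Fintype.card n = 2 * m + 1) {S : Matrix n n F}
    (hS : S.IsSymm) (hSdet : IsUnit S.det) (c : F) :
    ∑ w : n → F, η (w ⬝ᵥ S *ᵥ w + c) =
      (Fintype.card F : ℂ) ^ m * jacobiSum η (complexQuadraticChar F) *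
        complexQuadraticChar F ((-1) ^ (m + 1) * S.det) * η c * complexQuadraticChar F c := by
  have := invertibleOfNonzero (Ring.two_ne_zero hF)
  obtain ⟨P, a, hP, hPS⟩ := hS.exists_transpose_mul_mul_eq_diagonal
  have hdet : ∏ i, a i = P.det ^ 2 * S.det := by
    rw [← det_diagonal, ← hPS, det_mul, det_mul, det_transpose]
    ring
  have ha (i : n) : a i ≠ 0 := prod_ne_zero_iff.mp
    (hdet ▸ mul_ne_zero (pow_ne_zero _ hP.ne_zero) hSdet.ne_zero) i (mem_univ i)
  have hdiag (u : n → F) : u ⬝ᵥ diagonal a *ᵥ u = ∑ i, a i * u i ^ 2 := by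
    simp only [dotProduct, mulVec_diagonal]
    exact sum_congr rfl fun i _ => by ring
  rw [Matrix.sum_apply_dotProduct_mulVec_eq hP S (fun x => η (x + c)), hPS]
  simp_rw [hdiag]
  rw [sum_mulChar_weightedSumSquares_add hF hη hn ha, hdet, mul_left_comm,
    map_mul (complexQuadraticChar F) (P.det ^ 2), complexQuadraticChar_sq hP.ne_zero, one_mul]

/-- Lemma 5.3, odd-rank case: for `p` an odd prime, `η` a multiplicative character of `F_p`
with `η² ≠ 1`, `S` an invertible symmetric `r × r` matrix with `r` odd, and `c ∈ F_p`,
`∑_{w ∈ F_p^r} η(w S wᵀ + c) = p^((r-1)/2) J(η,φ) φ((-1)^((r+1)/2) det S) η(c) φ(c)`. -/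
theorem charSum_quadForm_odd_rank (p r : ℕ) [Fact p.Prime] (hp : p ≠ 2)
    (η : MulChar (ZMod p) ℂ) (hη : η ^ 2 ≠ 1) (hr : Odd r)
    (S : Matrix (Fin r) (Fin r) (ZMod p)) (hS : Sᵀ = S) (hSdet : IsUnit S.det)
    (c : ZMod p) :
    (∑ w : Fin r → ZMod p, η (dotProduct w (S.mulVec w) + c)) =
      (p : ℂ) ^ ((r - 1) / 2) * jacobiSum η (quadCharC p) *
        quadCharC p ((-1 : ZMod p) ^ ((r + 1) / 2) * S.det) * η c * quadCharC p c := by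
  obtain ⟨m, rfl⟩ := hr
  have hF : ringChar (ZMod p) ≠ 2 := by rwa [ZMod.ringChar_zmod_n]
  have h := sum_mulChar_quadForm_add hF hη (Fintype.card_fin _) hS hSdet c
  rw [ZMod.card] at h
  rwa [show (2 * m + 1 - 1) / 2 = m by omega, show (2 * m + 1 + 1) / 2 = m + 1 by omega]
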